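/- (Proposition 1, Chain Rule.) Let G be an acyclic directed graph in which the set of paths between any two vertices is finite, let (Z, μ) be a measure space, and for each edge e let w_e : Z → ℝ be a measurable function such that for every path p the function z ↦ ∏_{e ∈ p} w_e(z) is integrable with respect to μ. Let π = [π₀, π₁, …, πₙ] be a pattern such that for each i < n there exists at least one path from πᵢ to πᵢ₊₁. Then the pattern influence ∑_{p ∈ γ(π)} ∫_Z ∏_{e ∈ p} w_e(z) dμ(z) equals ∫_Z ∏_{i=1}^{n} ( ∑_{p a path from πᵢ₋₁ to πᵢ} ∏_{e ∈ p} w_e(z) ) dμ(z). -/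

import Mathlib

universe v u

open MeasureTheory

/-- A quiver (directed graph) is *acyclic* if for every vertex `a`, the only path from `a`
back to `a` is the nil path. -/
def Quiver.IsAcyclic (V : Type*) [Quiver V] : Prop :=
  ∀ (a : V) (p : Quiver.Path a a), p = Quiver.Path.nil

/-- The list of vertices visited along a path, including both endpoints
(the starting vertex comes first). -/
def Quiver.Path.visitedVertices {V : Type*} [Quiver V] {a : V} :
    ∀ {b : V}, Quiver.Path a b → List V
  | _, Quiver.Path.nil => [a]
  | b, Quiver.Path.cons p _ => Quiver.Path.visitedVertices p ++ [b]

/-- A path *passes through* a vertex `w` if `w` is one of the vertices visited along it. -/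
def Quiver.Path.PassesThrough {V : Type*} [Quiver V] {a b : V}
    (p : Quiver.Path a b) (w : V) : Prop :=
  w ∈ p.visitedVertices

/-- The pointwise weight of a path: at each point `z`, the product of the weights
`w e z` of its edges (the nil path has weight `1`). -/
def Quiver.Path.weightAt {V : Type*} [Quiver V] {Z : Type*}
    (w : ∀ {a b : V}, (a ⟶ b) → Z → ℝ) {a : V} :
    ∀ {b : V}, Quiver.Path a b → Z → ℝ
  | _, Quiver.Path.nil, _ => 1
  | _, Quiver.Path.cons p e, z => Quiver.Path.weightAt w p z * w e z


/-!
Pointwise in `z` the identity is combinatorial. In an acyclic quiver, a path through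
`π₀, …, πₙ₊₁` splits at `πₙ` into a path through `π₀, …, πₙ` followed by an arbitrary path
`πₙ ⟶ πₙ₊₁`, and the splitting is unique: a path visits `πₙ` only once, and no `πᵢ` with
`i ≤ n` can come after `πₙ`, because `πᵢ` reaches `πₙ`. Path weights are multiplicative
under composition, so induction on `n` turns the sum over `γ(π)` into the product of the
sums over the segments; integrating and exchanging the finite sum with the integral gives
the theorem.
-/

namespace Quiver

variable {V : Type*} [Quiver V]

namespace Path

theorem visitedVertices_eq_vertices {a : V} :
    ∀ {b : V} (p : Path a b), p.visitedVertices = p.vertices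
  | _, nil => rfl
  | _, cons p _ => by
      rw [visitedVertices, vertices_cons, visitedVertices_eq_vertices p, List.concat_eq_append]

theorem passesThrough_iff_mem_vertices {a b : V} (p : Path a b) (x : V) :
    p.PassesThrough x ↔ x ∈ p.vertices := by
  rw [PassesThrough, visitedVertices_eq_vertices]

theorem weightAt_eq_weight {Z : Type*} (w : ∀ {a b : V}, (a ⟶ b) → Z → ℝ) {a : V} (z : Z) :
    ∀ {b : V} (p : Path a b), p.weightAt w z = p.weight (fun e => w e z)
  | _, nil => (weight_nil _ _).symm
  | _, cons p e => by rw [weightAt, weight_cons, weightAt_eq_weight w z p]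

theorem mem_vertices_comp {a b c : V} (p : Path a b) (q : Path b c) (x : V) :
    x ∈ (p.comp q).vertices ↔ x ∈ p.vertices ∨ x ∈ q.vertices := by
  rw [vertices_comp, List.mem_append]
  refine or_congr_left' fun hx => ⟨List.mem_of_mem_dropLast, fun hp => ?_⟩
  rw [← dropLast_append_end_eq, List.mem_append, List.mem_singleton] at hp
  exact hp.resolve_right (by rintro rfl; exact hx (start_mem_vertices q))

end Path

namespace IsAcyclic

theorem eq_of_reachable_of_reachable (hG : IsAcyclic V) {a b : V} (hab : Reachable a b)
    (hba : Reachable b a) : a = b := by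
  obtain ⟨p⟩ := hab
  obtain ⟨q⟩ := hba
  exact p.eq_of_length_zero (Path.comp_eq_nil_iff.1 (hG a (p.comp q))).1

theorem comp_inj (hG : IsAcyclic V) {a b : V} {q q' : Path a b} :
    ∀ {c : V} {r r' : Path b c}, q.comp r = q'.comp r' → q = q' ∧ r = r'
  | _, .nil, r', h => by
      obtain rfl := hG b r'
      exact ⟨h, rfl⟩
  | _, .cons s e, .nil, _ => absurd (hG b (s.cons e)) (Path.cons_ne_nil s e)
  | _, .cons s e, .cons s' e', h => by
      obtain rfl := Path.obj_eq_of_cons_eq_cons h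
      obtain ⟨rfl, rfl⟩ := comp_inj hG (eq_of_heq (Path.heq_of_cons_eq_cons h))
      obtain rfl := eq_of_heq (Path.hom_heq_of_cons_eq_cons h)
      exact ⟨rfl, rfl⟩

theorem mem_vertices_left_of_mem_vertices_comp (hG : IsAcyclic V) {a b c x : V}
    (q : Path a b) (r : Path b c) (hx : x ∈ (q.comp r).vertices) (hxb : Reachable x b) :
    x ∈ q.vertices := by
  rcases (q.mem_vertices_comp r x).1 hx with hq | hr
  · exact hq
  · obtain ⟨r₁, -, -⟩ := r.exists_eq_comp_of_mem_vertices hr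
    obtain rfl := hG.eq_of_reachable_of_reachable hxb r₁.reachable
    exact q.end_mem_vertices

end IsAcyclic

theorem reachable_last_of_forall_reachable_succ {n : ℕ} (π : Fin (n + 1) → V)
    (hπ : ∀ i : Fin n, Reachable (π i.castSucc) (π i.succ)) (j : Fin (n + 1)) :
    Reachable (π j) (π (Fin.last n)) := by
  induction j using Fin.reverseInduction with
  | last => exact .rfl
  | cast i ih => exact (hπ i).trans ih

/-- The set `γ(π)` of the paper. -/
abbrev PatternPaths {n : ℕ} (π : Fin (n + 1) → V) : Type _ :=
  {p : Path (π 0) (π (Fin.last n)) // ∀ i, p.PassesThrough (π i)}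

namespace PatternPaths

variable {n : ℕ} {π : Fin (n + 2) → V}

def snoc (q : PatternPaths fun i => π i.castSucc)
    (r : Path (π (Fin.last n).castSucc) (π (Fin.last (n + 1)))) : PatternPaths π :=
  ⟨q.1.comp r, fun i => (Path.passesThrough_iff_mem_vertices _ _).2 <|
    (Path.mem_vertices_comp _ _ _).2 <| by
      induction i using Fin.lastCases with
      | last => exact .inr r.end_mem_vertices
      | cast j => exact .inl ((Path.passesThrough_iff_mem_vertices _ _).1 (q.2 j))⟩

theorem snoc_bijective (hG : IsAcyclic V)
    (hπ : ∀ i : Fin (n + 1), Reachable (π i.castSucc) (π i.succ)) :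
    Function.Bijective (Function.uncurry (snoc (π := π))) := by
  refine ⟨fun ⟨q, r⟩ ⟨q', r'⟩ h => ?_, fun ⟨p, hp⟩ => ?_⟩
  · obtain ⟨hq, hr⟩ := hG.comp_inj (congrArg Subtype.val h)
    exact Prod.ext (Subtype.ext hq) hr
  · have hlast := (p.passesThrough_iff_mem_vertices _).1 (hp (Fin.last n).castSucc)
    obtain ⟨q, r, rfl⟩ := p.exists_eq_comp_of_mem_vertices hlast
    refine ⟨(⟨q, fun j => (Path.passesThrough_iff_mem_vertices _ _).2 ?_⟩, r), rfl⟩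
    exact hG.mem_vertices_left_of_mem_vertices_comp q r
      ((Path.passesThrough_iff_mem_vertices _ _).1 (hp j.castSucc))
      (reachable_last_of_forall_reachable_succ (fun i => π i.castSucc)
        (fun i => hπ i.castSucc) j)

end PatternPaths

open scoped Classical in
theorem sum_weight_patternPaths [∀ a b : V, Fintype (Path a b)] (hG : IsAcyclic V)
    {R : Type*} [CommSemiring R] (w : ∀ {a b : V}, (a ⟶ b) → R) :
    ∀ {n : ℕ} (π : Fin (n + 1) → V), (∀ i : Fin n, Reachable (π i.castSucc) (π i.succ)) →
      ∑ p : PatternPaths π, p.1.weight w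
        = ∏ i : Fin n, ∑ p : Path (π i.castSucc) (π i.succ), p.weight w
  | 0, π, _ => by
      have hnil : ∀ i, (Path.nil : Path (π 0) (π 0)).PassesThrough (π i) := fun i => by
        rw [Fin.fin_one_eq_zero i]
        exact (Path.passesThrough_iff_mem_vertices _ _).2 (Path.start_mem_vertices _)
      rw [Fin.prod_univ_zero]
      exact (Fintype.sum_eq_single ⟨.nil, hnil⟩
        fun p hp => absurd (Subtype.ext (hG _ p.1)) hp).trans (Path.weight_nil _ _)
  | n + 1, π, hπ => by
      calc ∑ p : PatternPaths π, p.1.weight w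
          = ∑ x : (PatternPaths fun i => π i.castSucc) ×
                Path (π (Fin.last n).castSucc) (π (Fin.last (n + 1))),
              x.1.1.weight w * x.2.weight w :=
            (Fintype.sum_bijective _ (PatternPaths.snoc_bijective hG hπ) _ _
              fun x => (Path.weight_comp w x.1.1 x.2).symm).symm
        _ = (∑ q : PatternPaths fun i => π i.castSucc, q.1.weight w) *
              ∑ r : Path (π (Fin.last n).castSucc) (π (Fin.last (n + 1))), r.weight w := by
            rw [Fintype.sum_prod_type, Finset.sum_mul_sum]
        _ = ∏ i : Fin (n + 1), ∑ p : Path (π i.castSucc) (π i.succ), p.weight w := by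
            rw [sum_weight_patternPaths hG w _ fun i => hπ i.castSucc, Fin.prod_univ_castSucc]
            rfl

end Quiver

open scoped Classical in
/-- **Proposition 1 (Chain Rule).** Let `G` be an acyclic directed graph with finite path
sets, `(Z, μ)` a measure space, and for each edge `e` a measurable weight function
`w e : Z → ℝ` such that every path's weight function is integrable. Then for every pattern
`π = [π₀, …, πₙ]` (each adjacent pair joined by at least one path), the pattern influence
`∑_{p ∈ γ(π)} ∫ ∏_{e ∈ p} w e z ∂μ` equals
`∫ ∏_{i=1}^{n} (∑_{p : path πᵢ₋₁ → πᵢ} ∏_{e ∈ p} w e z) ∂μ`. -/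
theorem pattern_influence_chain_rule {V : Type u} [Quiver.{v + 1} V]
    [∀ a b : V, Fintype (Quiver.Path a b)] (hG : Quiver.IsAcyclic V)
    {Z : Type*} [MeasurableSpace Z] (μ : Measure Z)
    (w : ∀ {a b : V}, (a ⟶ b) → Z → ℝ)
    (hmeas : ∀ {a b : V} (e : a ⟶ b), Measurable (w e))
    (hint : ∀ {a b : V} (p : Quiver.Path a b), Integrable (p.weightAt w) μ)
    {n : ℕ} (π : Fin (n + 1) → V)
    (hπ : ∀ i : Fin n, Nonempty (Quiver.Path (π i.castSucc) (π i.succ))) :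
    (∑ p : {p : Quiver.Path (π 0) (π (Fin.last n)) //
        ∀ i : Fin (n + 1), p.PassesThrough (π i)},
        ∫ z, (p : Quiver.Path (π 0) (π (Fin.last n))).weightAt w z ∂μ)
      = ∫ z, ∏ i : Fin n,
          ∑ p : Quiver.Path (π i.castSucc) (π i.succ), p.weightAt w z ∂μ := by
  rw [← integral_finsetSum _ fun p _ => hint p.1]
  congr 1
  funext z
  simp only [Quiver.Path.weightAt_eq_weight]
  exact Quiver.sum_weight_patternPaths hG (fun e => w e z) π hπ
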